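/- Let S_1 be the set of valid Logical Algorithms states of program P and S_2 = {chrToLa(σ) | ⟨G,∅,true,∅⟩_1 →*_{ω_p,T(P)} σ, G ∈ S_1}. Turn both transition systems into labeled transition systems: an LA transition σ →_P σ' gets label σ' \ σ; a CHR^rp transition σ →_{T(P)} σ' gets label chrToLa(σ') \ chrToLa(σ) if this set is nonempty and the silent label τ otherwise. Then the equality relation between S_1 and S_2 is a weak bisimulation: whenever p = q and p makes a transition labeled α, q can match it by a sequence of silent transitions, one α-labeled transition, and further silent transitions, reaching a state equal to the successor of p, and symmetrically. -/

import Mathlib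

namespace LA2CHR

/-- Mode indicators: positively asserted (`p`), negatively asserted (`n`), or both (`b`). -/
inductive Mode : Type
  | p | n | b
deriving DecidableEq

/-- CHR constraints of the translated program `T(P)`: for each ground user-defined
LA atom `a`, `raw a` is the CHR constraint `a(X̄)`, `rawDel a` is `del(a(X̄))`, and
`rep a m` is the representation constraint `a_r(X̄, m)` with mode indicator `m`. -/
inductive TC (α : Type) : Type
  | raw : α → TC α
  | rawDel : α → TC α
  | rep : α → Mode → TC α
deriving DecidableEq

/-- Ground Logical Algorithms assertions: positive (`pos a` is `a`) or
negative (`del a` is `del(a)`). -/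
inductive LAAtom (α : Type) : Type
  | pos : α → LAAtom α
  | del : α → LAAtom α
deriving DecidableEq

/-- A ground instance of a Logical Algorithms rule, with the comparison antecedents
already evaluated away: a ground instance belongs to the program iff its comparisons
are true.  `posA` are the (distinct) positive user-defined ground antecedents, `negA`
the atoms of the negative (`del`) antecedents, `concl` the instantiated conclusion and
`prio` the instantiated rule priority. -/
structure Inst (α : Type) where
  prio : ℕ
  posA : Finset α
  negA : Finset α
  concl : Finset (LAAtom α)

variable {α : Type}

/-- Applicability of a ground rule instance of `P` in an LA state
(the priority condition is not included). -/
def LAApplicable (P : Set (Inst α)) (σ : Set (LAAtom α)) (ι : Inst α) : Prop :=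
  ι ∈ P ∧ (∀ a ∈ ι.posA, LAAtom.pos a ∈ σ ∧ LAAtom.del a ∉ σ) ∧
    (∀ a ∈ ι.negA, LAAtom.del a ∈ σ) ∧ ¬ ↑ι.concl ⊆ σ

/-- The `Apply` transition of Logical Algorithms: a highest-priority applicable ground
rule instance whose conclusion is not yet contained in the state fires. -/
def LAStep (P : Set (Inst α)) (σ σ' : Set (LAAtom α)) : Prop :=
  ∃ ι, LAApplicable P σ ι ∧ σ' = σ ∪ ↑ι.concl ∧
    ∀ ι', LAApplicable P σ ι' → ι.prio ≤ ι'.prio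

/-- Names of the rules of the translated CHR^rp program `T(P)`: the six
set/deletion-semantics rule schemas (for all user-defined predicates at once,
instantiated per ground atom), and one propagation rule per ground LA rule instance
(the ground collapse of the rules `r_ρ`). -/
inductive RuleTag (α : Type) : Type
  | keepPos | mergePos | newPos | keepNeg | mergeNeg | newNeg
  | inst : Inst α → RuleTag α

/-- Rule priorities of `T(P)`: the update rules have priority 1, the rules creating a
fresh representation have priority 2, and the translation of an LA rule of priority
`p` has priority `p + 2`. -/
def RuleTag.prio : RuleTag α → ℕ
  | .keepPos => 1
  | .mergePos => 1
  | .keepNeg => 1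
  | .mergeNeg => 1
  | .newPos => 2
  | .newNeg => 2
  | .inst ι => ι.prio + 2

/-- CHR^rp execution states `⟨G, S, true, T⟩_n`: goal, CHR constraint store of
identified constraints, propagation history (recording a rule together with the set of
identified constraints it fired on) and next free identifier.  As the translated
program has no built-in tell constraints, the built-in store is always `true` and is
omitted. -/
structure CState (α : Type) where
  goal : Multiset (TC α)
  store : Set (TC α × ℕ)
  hist : Set (RuleTag α × Set (TC α × ℕ))
  next : ℕ

/-- Conclusion atoms as CHR constraints. -/
def toTC : LAAtom α → TC α
  | .pos a => .raw a
  | .del a => .rawDel a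

/-- `Fires P χ t H R B`: rule `t` of `T(P)` has an instance in state `χ` matching the
set `H` of identified stored head constraints, of which the ones in `R` are removed,
with instantiated body `B`.  This comprises all conditions of the ω_p `Apply`
transition except the empty-goal, propagation-history and priority conditions. -/
inductive Fires (P : Set (Inst α)) (χ : CState α) :
    RuleTag α → Set (TC α × ℕ) → Set (TC α × ℕ) → Multiset (TC α) → Prop
  | keepPos (a : α) (m : Mode) (i j : ℕ) : m ≠ Mode.n →
      (TC.rep a m, i) ∈ χ.store → (TC.raw a, j) ∈ χ.store →
      Fires P χ .keepPos {(TC.rep a m, i), (TC.raw a, j)} {(TC.raw a, j)} 0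
  | mergePos (a : α) (i j : ℕ) :
      (TC.rep a Mode.n, i) ∈ χ.store → (TC.raw a, j) ∈ χ.store →
      Fires P χ .mergePos {(TC.rep a Mode.n, i), (TC.raw a, j)}
        {(TC.rep a Mode.n, i), (TC.raw a, j)} {TC.rep a Mode.b}
  | newPos (a : α) (j : ℕ) : (TC.raw a, j) ∈ χ.store →
      Fires P χ .newPos {(TC.raw a, j)} {(TC.raw a, j)} {TC.rep a Mode.p}
  | keepNeg (a : α) (m : Mode) (i j : ℕ) : m ≠ Mode.p →
      (TC.rep a m, i) ∈ χ.store → (TC.rawDel a, j) ∈ χ.store →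
      Fires P χ .keepNeg {(TC.rep a m, i), (TC.rawDel a, j)} {(TC.rawDel a, j)} 0
  | mergeNeg (a : α) (i j : ℕ) :
      (TC.rep a Mode.p, i) ∈ χ.store → (TC.rawDel a, j) ∈ χ.store →
      Fires P χ .mergeNeg {(TC.rep a Mode.p, i), (TC.rawDel a, j)}
        {(TC.rep a Mode.p, i), (TC.rawDel a, j)} {TC.rep a Mode.b}
  | newNeg (a : α) (j : ℕ) : (TC.rawDel a, j) ∈ χ.store →
      Fires P χ .newNeg {(TC.rawDel a, j)} {(TC.rawDel a, j)} {TC.rep a Mode.n}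
  | inst (ι : Inst α) (fp fn : α → ℕ) (fm : α → Mode) : ι ∈ P →
      (∀ a ∈ ι.posA, (TC.rep a Mode.p, fp a) ∈ χ.store) →
      (∀ a ∈ ι.negA, fm a ≠ Mode.p ∧ (TC.rep a (fm a), fn a) ∈ χ.store) →
      Fires P χ (.inst ι)
        ((fun a => (TC.rep a Mode.p, fp a)) '' ↑ι.posA ∪
          (fun a => (TC.rep a (fm a), fn a)) '' ↑ι.negA)
        ∅ (Multiset.map toTC ι.concl.val)

/-- Transition labels: `Introduce`, or `Apply` of a given rule of `T(P)`. -/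
inductive Lab (α : Type) : Type
  | intro : Lab α
  | apply : RuleTag α → Lab α

variable [DecidableEq α]

/-- The transitions of the priority semantics ω_p for the translated program `T(P)`:
`Introduce` moves a constraint from the goal to the store with a fresh identifier;
`Apply` (possible only when the goal is empty) fires an instance of a rule whose
history tuple is not yet recorded and such that no fireable rule instance has a
strictly higher priority. -/
inductive Step (P : Set (Inst α)) : CState α → Lab α → CState α → Prop
  | intro (χ : CState α) (c : TC α) : c ∈ χ.goal →
      Step P χ .intro ⟨χ.goal.erase c, insert (c, χ.next) χ.store, χ.hist, χ.next + 1⟩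
  | apply (χ : CState α) (t : RuleTag α) (H R : Set (TC α × ℕ)) (B : Multiset (TC α)) :
      χ.goal = 0 → Fires P χ t H R B → (t, H) ∉ χ.hist →
      (∀ t' H' R' B', Fires P χ t' H' R' B' → (t', H') ∉ χ.hist →
        RuleTag.prio t ≤ RuleTag.prio t') →
      Step P χ (.apply t) ⟨B, χ.store \ R, insert (t, H) χ.hist, χ.next⟩

/-- Some ω_p transition. -/
def StepAny (P : Set (Inst α)) (χ χ' : CState α) : Prop := ∃ l, Step P χ l χ'

/-- An ω_p transition that is an `Introduce` or fires a rule of priority 1 or 2. -/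
def Step2 (P : Set (Inst α)) (χ χ' : CState α) : Prop :=
  ∃ l, Step P χ l χ' ∧ ∀ t, l = Lab.apply t → RuleTag.prio t ≤ 2

/-- Membership in `A = G ∪ chr(S)`. -/
def memA (χ : CState α) (c : TC α) : Prop := c ∈ χ.goal ∨ ∃ i, (c, i) ∈ χ.store

/-- The mapping from (reachable) CHR^rp execution states of `T(P)` to LA states. -/
def chrToLa (χ : CState α) : Set (LAAtom α) :=
  {x | (∃ a, x = LAAtom.pos a ∧
          (memA χ (TC.raw a) ∨ ∃ m, m ≠ Mode.n ∧ memA χ (TC.rep a m))) ∨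
       (∃ a, x = LAAtom.del a ∧
          (memA χ (TC.rawDel a) ∨ ∃ m, m ≠ Mode.p ∧ memA χ (TC.rep a m)))}

/-- Initial states `⟨G, ∅, true, ∅⟩_n` where the goal `G` contains only constraints of
the forms `a(X̄)` and `del(a(X̄))` (no `a_r` constraints). -/
def Init (χ : CState α) : Prop :=
  (∀ c ∈ χ.goal, ∃ a, c = TC.raw a ∨ c = TC.rawDel a) ∧ χ.store = ∅ ∧ χ.hist = ∅

/-- Reachability (w.r.t. ω_p and program `T(P)`) from an initial state. -/
def Reachable (P : Set (Inst α)) (χ : CState α) : Prop :=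
  ∃ χ₀, Init χ₀ ∧ Relation.ReflTransGen (StepAny P) χ₀ χ

/-- Pre-normal form: empty goal, the store contains only `a_r(X̄, M)` constraints, and
two stored representations of the same atom have the same identifier. -/
def PreNormal (χ : CState α) : Prop :=
  χ.goal = 0 ∧ (∀ c ∈ χ.store, ∃ a m, c.1 = TC.rep a m) ∧
  ∀ a m₁ m₂ i₁ i₂, (TC.rep a m₁, i₁) ∈ χ.store → (TC.rep a m₂, i₂) ∈ χ.store → i₁ = i₂

/-- A rule instance is implied in a state `σ` if its conclusion is contained in
`chrToLa σ`. -/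
def Implied (ι : Inst α) (χ : CState α) : Prop := ↑ι.concl ⊆ chrToLa χ

end LA2CHR

namespace LA2CHR

variable {α : Type} [DecidableEq α]

/-- The labeled transition system of Logical Algorithms: a transition `σ → σ'` of `P`
is labeled by the state change `σ' \ σ` (labels are `Option`s, `none` being the silent
label τ; LA transitions are never silent). -/
def LaLts (P : Set (Inst α)) (σ : Set (LAAtom α)) (l : Option (Set (LAAtom α)))
    (σ' : Set (LAAtom α)) : Prop :=
  LAStep P σ σ' ∧ l = some (σ' \ σ)

/-- The labeled transition system induced on `chrToLa`-images of reachable CHR^rp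
states of `T(P)`: a CHR^rp transition `σ → σ'` yields a transition from `chrToLa σ` to
`chrToLa σ'` labeled `chrToLa σ' \ chrToLa σ` if this set is nonempty, and the silent
label τ (`none`) otherwise. -/
def ChrLts (P : Set (Inst α)) (q : Set (LAAtom α)) (l : Option (Set (LAAtom α)))
    (q' : Set (LAAtom α)) : Prop :=
  ∃ χ χ', Reachable P χ ∧ StepAny P χ χ' ∧ chrToLa χ = q ∧ chrToLa χ' = q' ∧
    (chrToLa χ' \ chrToLa χ = ∅ → l = none) ∧
    (chrToLa χ' \ chrToLa χ ≠ ∅ → l = some (chrToLa χ' \ chrToLa χ))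

/-- Silent (τ-labeled) transitions of an LTS. -/
def Tau {St L : Type*} (T : St → Option L → St → Prop) : St → St → Prop :=
  fun s s' => T s none s'

/-- `R` is a weak bisimulation between the LTSs `T₁` and `T₂`: whenever `p R q` and
`p` makes a transition labeled `α`, `q` can match it — by a sequence of silent
transitions, one `α`-labeled transition, and further silent transitions if `α` is
visible, and by a sequence of silent transitions if `α` is the silent label τ —
reaching a state related to the successor of `p`; and symmetrically. -/
def IsWeakBisim {St₁ St₂ L : Type*} (T₁ : St₁ → Option L → St₁ → Prop)
    (T₂ : St₂ → Option L → St₂ → Prop) (R : St₁ → St₂ → Prop) : Prop :=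
  (∀ p q p', R p q → Tau T₁ p p' →
    ∃ q', Relation.ReflTransGen (Tau T₂) q q' ∧ R p' q') ∧
  (∀ p q p' a, R p q → T₁ p (some a) p' →
    ∃ q₁ q₂ q', Relation.ReflTransGen (Tau T₂) q q₁ ∧ T₂ q₁ (some a) q₂ ∧
      Relation.ReflTransGen (Tau T₂) q₂ q' ∧ R p' q') ∧
  (∀ p q q', R p q → Tau T₂ q q' →
    ∃ p', Relation.ReflTransGen (Tau T₁) p p' ∧ R p' q') ∧
  (∀ p q q' a, R p q → T₂ q (some a) q' →
    ∃ p₁ p₂ p', Relation.ReflTransGen (Tau T₁) p p₁ ∧ T₁ p₁ (some a) p₂ ∧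
      Relation.ReflTransGen (Tau T₁) p₂ p' ∧ R p' q')

end LA2CHR

/-!
Reachable CHR^rp states satisfy an invariant (`Inv`): every atom has at most one stored
`a_r` constraint, identifiers are fresh, every history entry of a translated LA rule is
implied, and a history entry containing an `a(X̄)` or `del(a(X̄))` constraint refers to one
that has since been removed. Rules of priority 1 and 2 do not change the `chrToLa`-image,
and a translated LA rule adds exactly its conclusion to it.

LA to CHR: from a reachable state, firing the priority 1 and 2 rules exhaustively leads to
a pre-normal state with the same image. There, every translated rule that can fire with
lower LA priority than the rule `ι` to be simulated is implied, since otherwise it would be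
applicable in LA. Firing these one at a time only adds `a(X̄)`/`del(a(X̄))` constraints that
are already represented, so renormalizing fires only keep rules, the store comes back
unchanged, and the finite set of such blockers shrinks. Once it is empty, the translation of
`ι` fires and performs the LA step. As the CHR transition system is taken on images, the
silent normalization steps need not be matched.

CHR to LA: a visible step fires a translated rule `ι` whose conclusion is not implied. Being
of highest priority, it excludes update rules when `ι.prio > 0`, so the state is pre-normal
and every LA-applicable rule could fire as well; hence `ι` has minimal LA priority.
-/

theorem Set.biUnion_sdiff_eq_of_subset {β γ : Type*} {f : β → Set γ} {X : Set γ}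
    {R H S : Set β} (hRH : R ⊆ H) (hHS : H ⊆ S) (hX : X ∪ ⋃ e ∈ H \ R, f e = ⋃ e ∈ H, f e) :
    X ∪ ⋃ e ∈ S \ R, f e = ⋃ e ∈ S, f e := by
  have hsub : (⋃ e ∈ H \ R, f e) ⊆ ⋃ e ∈ S \ R, f e :=
    Set.biUnion_subset_biUnion_left (Set.sdiff_subset_sdiff_left hHS)
  conv_rhs => rw [← Set.union_sdiff_cancel' hRH hHS, Set.biUnion_union, ← hX, Set.union_assoc,
    Set.union_eq_right.2 hsub]

theorem exists_reflTransGen_of_measure_lt {β : Type*} {r : β → β → Prop} {I D : β → Prop}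
    (μ : β → ℕ) (h : ∀ x, I x → ¬ D x → ∃ y, Relation.ReflTransGen r x y ∧ I y ∧ μ y < μ x) :
    ∀ x, I x → ∃ y, Relation.ReflTransGen r x y ∧ I y ∧ D y := by
  intro x
  induction hx : μ x using Nat.strong_induction_on generalizing x with
  | _ n ih =>
    intro hI
    by_cases hD : D x
    · exact ⟨x, .refl, hI, hD⟩
    obtain ⟨y, hxy, hIy, hlt⟩ := h x hI hD
    obtain ⟨z, hyz, hIz, hDz⟩ := ih _ (hx ▸ hlt) y rfl hIy
    exact ⟨z, hxy.trans hyz, hIz, hDz⟩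

namespace LA2CHR

variable {α : Type} {P : Set (Inst α)} {χ : CState α} {t : RuleTag α} {H R : Set (TC α × ℕ)}
  {B : Multiset (TC α)}

/-! ### The LA assertions represented by a state -/

section Image

def LAAtom.atom : LAAtom α → α
  | .pos a | .del a => a

def TC.toLa : TC α → Set (LAAtom α)
  | .raw a => {.pos a}
  | .rawDel a => {.del a}
  | .rep a m => {x | x = .pos a ∧ m ≠ .n ∨ x = .del a ∧ m ≠ .p}

def TC.isRaw : TC α → Bool
  | .rep _ _ => false
  | _ => true

def RuleTag.IsUpdate : RuleTag α → Prop
  | .inst _ => False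
  | _ => True

theorem RuleTag.one_le_prio (t : RuleTag α) : 1 ≤ t.prio := by
  cases t <;> simp [RuleTag.prio]

@[simp] theorem toLa_toTC (y : LAAtom α) : (toTC y).toLa = {y} := by
  cases y <;> rfl

@[simp] theorem isRaw_toTC (y : LAAtom α) : (toTC y).isRaw := by
  cases y <;> rfl

theorem toTC_injective : Function.Injective (toTC : LAAtom α → TC α) := by
  rintro (a | a) (b | b) h <;> cases h <;> rfl

theorem LAAtom.atom_eq_of_mem_toLa_rep {y : LAAtom α} {a : α} {m : Mode}
    (h : y ∈ (TC.rep a m).toLa) : y.atom = a := by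
  rcases h with ⟨rfl, -⟩ | ⟨rfl, -⟩ <;> rfl

theorem TC.toLa_finite (c : TC α) : c.toLa.Finite := by
  cases c with
  | raw | rawDel => exact Set.finite_singleton _
  | rep a m =>
    refine (Set.toFinite {LAAtom.pos a, LAAtom.del a}).subset ?_
    rintro x (⟨rfl, -⟩ | ⟨rfl, -⟩) <;> simp

theorem mem_chrToLa {x : LAAtom α} : x ∈ chrToLa χ ↔ ∃ c, memA χ c ∧ x ∈ c.toLa := by
  constructor
  · rintro (⟨a, rfl, h | ⟨m, hm, h⟩⟩ | ⟨a, rfl, h | ⟨m, hm, h⟩⟩)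
    · exact ⟨_, h, rfl⟩
    · exact ⟨_, h, Or.inl ⟨rfl, hm⟩⟩
    · exact ⟨_, h, rfl⟩
    · exact ⟨_, h, Or.inr ⟨rfl, hm⟩⟩
  · rintro ⟨c | c | ⟨c, m⟩, h, hx⟩
    · exact Or.inl ⟨c, hx, Or.inl h⟩
    · exact Or.inr ⟨c, hx, Or.inl h⟩
    · rcases hx with ⟨rfl, hm⟩ | ⟨rfl, hm⟩
      exacts [Or.inl ⟨c, rfl, Or.inr ⟨m, hm, h⟩⟩, Or.inr ⟨c, rfl, Or.inr ⟨m, hm, h⟩⟩]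

theorem chrToLa_eq_biUnion (χ : CState α) :
    chrToLa χ = (⋃ c ∈ χ.goal, c.toLa) ∪ ⋃ e ∈ χ.store, e.1.toLa := by
  ext x
  simp only [mem_chrToLa, memA, Set.mem_union, Set.mem_iUnion, exists_prop, Prod.exists]
  aesop

theorem Fires.heads_subset (hf : Fires P χ t H R B) : H ⊆ χ.store := by
  cases hf with
  | inst ι fp fn fm _ hpos hneg =>
    rintro _ (⟨a, ha, rfl⟩ | ⟨a, ha, rfl⟩)
    exacts [hpos a ha, (hneg a ha).2]
  | _ => simp_all [Set.insert_subset_iff]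

theorem Fires.removed_subset (hf : Fires P χ t H R B) : R ⊆ H := by
  cases hf <;> simp

theorem Fires.toLa_heads (hf : Fires P χ t H R B) (ht : t.IsUpdate) :
    (⋃ c ∈ B, c.toLa) ∪ (⋃ e ∈ H \ R, e.1.toLa) = ⋃ e ∈ H, e.1.toLa := by
  cases hf with
  | inst => exact ht.elim
  | keepPos a m i j hm | keepNeg a m i j hm =>
    ext x; cases m <;> simp [TC.toLa] at hm ⊢
  | mergePos a i j | mergeNeg a i j | newPos a j | newNeg a j =>
    ext x; simp [TC.toLa, or_comm]

theorem chrToLa_apply_of_isUpdate (hg : χ.goal = 0) (hf : Fires P χ t H R B) (ht : t.IsUpdate)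
    (h : Set (RuleTag α × Set (TC α × ℕ))) (n : ℕ) :
    chrToLa ⟨B, χ.store \ R, h, n⟩ = chrToLa χ := by
  rw [chrToLa_eq_biUnion, chrToLa_eq_biUnion χ, hg,
    Set.biUnion_sdiff_eq_of_subset hf.removed_subset hf.heads_subset (hf.toLa_heads ht)]
  simp

theorem chrToLa_apply_inst {ι : Inst α} (hg : χ.goal = 0) (hf : Fires P χ (.inst ι) H R B)
    (h : Set (RuleTag α × Set (TC α × ℕ))) (n : ℕ) :
    chrToLa ⟨B, χ.store \ R, h, n⟩ = chrToLa χ ∪ ι.concl := by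
  cases hf
  ext x
  simp [chrToLa_eq_biUnion χ, chrToLa_eq_biUnion, hg, or_comm]

theorem chrToLa_subset_apply (hg : χ.goal = 0) (hf : Fires P χ t H R B)
    (h : Set (RuleTag α × Set (TC α × ℕ))) (n : ℕ) :
    chrToLa χ ⊆ chrToLa ⟨B, χ.store \ R, h, n⟩ := by
  cases t with
  | inst ι => rw [chrToLa_apply_inst hg hf]; exact Set.subset_union_left
  | _ => exact (chrToLa_apply_of_isUpdate hg hf trivial h n).ge

variable [DecidableEq α]

theorem memA_intro {c : TC α} (hc : c ∈ χ.goal) {d : TC α} :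
    memA ⟨χ.goal.erase c, insert (c, χ.next) χ.store, χ.hist, χ.next + 1⟩ d ↔ memA χ d := by
  simp only [memA, Set.mem_insert_iff, Prod.mk.injEq]
  by_cases hdc : d = c
  · subst hdc
    exact iff_of_true (Or.inr ⟨_, Or.inl ⟨rfl, rfl⟩⟩) (Or.inl hc)
  · simp [Multiset.mem_erase_of_ne hdc, hdc]

theorem chrToLa_intro {c : TC α} (hc : c ∈ χ.goal) :
    chrToLa ⟨χ.goal.erase c, insert (c, χ.next) χ.store, χ.hist, χ.next + 1⟩ = chrToLa χ := by
  ext x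
  simp only [mem_chrToLa, memA_intro hc]

theorem Step.chrToLa_eq_of_ne_inst {χ' : CState α} {l : Lab α} (hs : Step P χ l χ')
    (hl : ∀ ι, l ≠ .apply (.inst ι)) : chrToLa χ' = chrToLa χ := by
  cases hs with
  | intro c hc => exact chrToLa_intro hc
  | apply t H R B hg hf =>
    cases t <;> first
      | exact chrToLa_apply_of_isUpdate hg hf trivial _ _
      | exact absurd rfl (hl _)

theorem Step.chrToLa_eq_union_concl {χ' : CState α} {ι : Inst α}
    (hs : Step P χ (.apply (.inst ι)) χ') : chrToLa χ' = chrToLa χ ∪ ι.concl := by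
  cases hs with
  | apply t H R B hg hf => exact chrToLa_apply_inst hg hf _ _

theorem Step.chrToLa_subset {χ' : CState α} {l : Lab α} (hs : Step P χ l χ') :
    chrToLa χ ⊆ chrToLa χ' := by
  cases hs with
  | intro c hc => exact (chrToLa_intro hc).ge
  | apply t H R B hg hf => exact chrToLa_subset_apply hg hf _ _

end Image

/-! ### The invariant of reachable states -/

section Invariant

structure Inv (χ : CState α) : Prop where
  store_finite : χ.store.Finite
  store_lt_next : ∀ e ∈ χ.store, e.2 < χ.next
  hist_lt_next : ∀ t H, (t, H) ∈ χ.hist → ∀ e ∈ H, e.2 < χ.next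
  rep_unique : ∀ a m i m' i', (TC.rep a m, i) ∈ χ.store → (TC.rep a m', i') ∈ χ.store →
    m = m' ∧ i = i'
  goal_rep_fresh : ∀ a m, TC.rep a m ∈ χ.goal → ∀ m' i, (TC.rep a m', i) ∉ χ.store
  goal_countP_rep : χ.goal.countP (fun c => c.isRaw = false) ≤ 1
  hist_implied : ∀ ι H, (RuleTag.inst ι, H) ∈ χ.hist → Implied ι χ
  hist_raw_removed : ∀ t H, (t, H) ∈ χ.hist → ∀ e ∈ H, e.1.isRaw → e ∉ χ.store

theorem Inv.notMem_hist_of_raw (hv : Inv χ) {e : TC α × ℕ} (heH : e ∈ H) (he : e.1.isRaw)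
    (heS : e ∈ χ.store) : (t, H) ∉ χ.hist :=
  fun ht => hv.hist_raw_removed t H ht e heH he heS

theorem Inv.notMem_hist_of_applicable (hv : Inv χ) {ι : Inst α}
    (happ : LAApplicable P (chrToLa χ) ι) (H : Set (TC α × ℕ)) : (RuleTag.inst ι, H) ∉ χ.hist :=
  fun h => happ.2.2.2 (hv.hist_implied ι H h)

theorem Fires.exists_keep {y : LAAtom α} {m : Mode} {i j : ℕ} (hm : y ∈ (TC.rep y.atom m).toLa)
    (hrep : (TC.rep y.atom m, i) ∈ χ.store) (hraw : (toTC y, j) ∈ χ.store) :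
    ∃ t, Fires P χ t {(TC.rep y.atom m, i), (toTC y, j)} {(toTC y, j)} 0 ∧
      t.IsUpdate ∧ t.prio = 1 := by
  cases y with
  | pos a =>
    exact ⟨_, .keepPos a m i j (by simpa [TC.toLa, LAAtom.atom] using hm) hrep hraw, trivial, rfl⟩
  | del a =>
    exact ⟨_, .keepNeg a m i j (by simpa [TC.toLa, LAAtom.atom] using hm) hrep hraw, trivial, rfl⟩

theorem Fires.exists_merge {y : LAAtom α} {m : Mode} {i j : ℕ} (hm : y ∉ (TC.rep y.atom m).toLa)
    (hrep : (TC.rep y.atom m, i) ∈ χ.store) (hraw : (toTC y, j) ∈ χ.store) :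
    ∃ t R B, Fires P χ t {(TC.rep y.atom m, i), (toTC y, j)} R B ∧ t.IsUpdate ∧ t.prio = 1 := by
  cases y with
  | pos a =>
    obtain rfl : m = .n := by simpa [TC.toLa, LAAtom.atom] using hm
    exact ⟨_, _, _, .mergePos a i j hrep hraw, trivial, rfl⟩
  | del a =>
    obtain rfl : m = .p := by simpa [TC.toLa, LAAtom.atom] using hm
    exact ⟨_, _, _, .mergeNeg a i j hrep hraw, trivial, rfl⟩

theorem Fires.exists_new {y : LAAtom α} {j : ℕ} (hraw : (toTC y, j) ∈ χ.store) :
    ∃ t R B, Fires P χ t {(toTC y, j)} R B ∧ t.IsUpdate ∧ t.prio = 2 := by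
  cases y with
  | pos a => exact ⟨_, _, _, .newPos a j hraw, trivial, rfl⟩
  | del a => exact ⟨_, _, _, .newNeg a j hraw, trivial, rfl⟩

theorem Inv.exists_fires_prio_one (hv : Inv χ) {y : LAAtom α} {m : Mode} {i j : ℕ}
    (hrep : (TC.rep y.atom m, i) ∈ χ.store) (hraw : (toTC y, j) ∈ χ.store) :
    ∃ t H R B, Fires P χ t H R B ∧ (t, H) ∉ χ.hist ∧ t.IsUpdate ∧ t.prio = 1 := by
  have hfresh : ∀ t, (t, {(TC.rep y.atom m, i), (toTC y, j)}) ∉ χ.hist := fun _ =>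
    hv.notMem_hist_of_raw (Set.mem_insert_of_mem _ rfl) (isRaw_toTC y) hraw
  by_cases hm : y ∈ (TC.rep y.atom m).toLa
  · obtain ⟨t, hf, ht⟩ := Fires.exists_keep (P := P) hm hrep hraw
    exact ⟨t, _, _, _, hf, hfresh t, ht⟩
  · obtain ⟨t, R, B, hf, ht⟩ := Fires.exists_merge (P := P) hm hrep hraw
    exact ⟨t, _, _, _, hf, hfresh t, ht⟩

theorem Inv.exists_fires_prio_le_two (hv : Inv χ) {y : LAAtom α} {j : ℕ}
    (hraw : (toTC y, j) ∈ χ.store) :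
    ∃ t H R B, Fires P χ t H R B ∧ (t, H) ∉ χ.hist ∧ t.IsUpdate ∧ t.prio ≤ 2 := by
  by_cases hrep : ∃ m i, (TC.rep y.atom m, i) ∈ χ.store
  · obtain ⟨m, i, hrep⟩ := hrep
    obtain ⟨t, H, R, B, hf, hfr, ht, hp⟩ := hv.exists_fires_prio_one (P := P) hrep hraw
    exact ⟨t, H, R, B, hf, hfr, ht, hp.le.trans one_le_two⟩
  · obtain ⟨t, R, B, hf, ht, hp⟩ := Fires.exists_new (P := P) hraw
    exact ⟨t, _, R, B, hf, hv.notMem_hist_of_raw rfl (isRaw_toTC y) hraw, ht, hp.le⟩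

theorem Fires.exists_raw_rep_of_prio_eq_one (hf : Fires P χ t H R B) (ht : t.prio = 1) :
    ∃ y j m i, (toTC y, j) ∈ χ.store ∧ (TC.rep y.atom m, i) ∈ χ.store := by
  cases hf with
  | keepPos a m i j _ hrep hraw | mergePos a i j hrep hraw => exact ⟨.pos a, j, _, i, hraw, hrep⟩
  | keepNeg a m i j _ hrep hraw | mergeNeg a i j hrep hraw => exact ⟨.del a, j, _, i, hraw, hrep⟩
  | newPos | newNeg | inst => simp [RuleTag.prio] at ht

theorem Fires.isRaw_mem_removed (hf : Fires P χ t H R B) {e : TC α × ℕ} (heH : e ∈ H)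
    (he : e.1.isRaw) : e ∈ R := by
  cases hf with
  | inst => rcases heH with ⟨a, -, rfl⟩ | ⟨a, -, rfl⟩ <;> simp [TC.isRaw] at he
  | _ => aesop (add simp TC.isRaw)

theorem Fires.countP_rep_body_le_one (hf : Fires P χ t H R B) :
    B.countP (fun c => c.isRaw = false) ≤ 1 := by
  cases hf with
  | inst => simp [Multiset.countP_map]
  | _ => exact (Multiset.countP_le_card _ _).trans (by simp)

theorem Inv.body_rep_fresh (hv : Inv χ) (hf : Fires P χ t H R B)
    (hp : ∀ t' H' R' B', Fires P χ t' H' R' B' → (t', H') ∉ χ.hist → t.prio ≤ t'.prio)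
    {a : α} {m : Mode} (hm : TC.rep a m ∈ B) (m' : Mode) (i : ℕ) :
    (TC.rep a m', i) ∉ χ.store \ R := by
  rintro ⟨hS, hR⟩
  have hle : ∀ y j, (toTC y, j) ∈ χ.store → (TC.rep y.atom m', i) ∈ χ.store → t.prio ≤ 1 :=
    fun y j hraw hrep => by
      obtain ⟨t', H', R', B', hf', hfr', -, hp'⟩ := hv.exists_fires_prio_one (P := P) hrep hraw
      exact hp' ▸ hp t' H' R' B' hf' hfr'
  cases hf with
  | keepPos | keepNeg => simp at hm
  | inst => simp [toTC] at hm; aesop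
  | mergePos b i' j hrep | mergeNeg b i' j hrep =>
    obtain rfl : a = b := by simp_all
    obtain ⟨rfl, rfl⟩ := hv.rep_unique a m' i _ i' hS hrep
    simp at hR
  | newPos b j hraw =>
    obtain rfl : a = b := by simp_all
    exact absurd (hle (.pos a) j hraw hS) (by simp [RuleTag.prio])
  | newNeg b j hraw =>
    obtain rfl : a = b := by simp_all
    exact absurd (hle (.del a) j hraw hS) (by simp [RuleTag.prio])

theorem Init.inv (h : Init χ) : Inv χ := by
  obtain ⟨hgoal, hstore, hhist⟩ := h
  refine ⟨by simp [hstore], by simp [hstore], by simp [hhist], by simp [hstore], by simp [hstore],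
    ?_, by simp [hhist], by simp [hhist]⟩
  rw [Multiset.countP_eq_zero.2]
  · exact zero_le_one
  · intro c hc
    obtain ⟨a, rfl | rfl⟩ := hgoal c hc <;> simp [TC.isRaw]

theorem Inv.apply (hv : Inv χ) (hg : χ.goal = 0) (hf : Fires P χ t H R B)
    (hp : ∀ t' H' R' B', Fires P χ t' H' R' B' → (t', H') ∉ χ.hist → t.prio ≤ t'.prio) :
    Inv ⟨B, χ.store \ R, insert (t, H) χ.hist, χ.next⟩ := by
  refine ⟨hv.store_finite.sdiff, fun e he => hv.store_lt_next e he.1, ?_,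
    fun a m i m' i' h1 h2 => hv.rep_unique a m i m' i' h1.1 h2.1,
    fun a m hm => hv.body_rep_fresh hf hp hm, hf.countP_rep_body_le_one, ?_, ?_⟩
  · rintro t' H' (h | h) e he
    · obtain ⟨-, rfl⟩ := Prod.mk.inj h
      exact hv.store_lt_next e (hf.heads_subset he)
    · exact hv.hist_lt_next t' H' h e he
  · rintro ι H' (h | h)
    · obtain ⟨rfl, -⟩ := Prod.mk.inj h
      rw [Implied, chrToLa_apply_inst hg hf]
      exact Set.subset_union_right
    · exact (hv.hist_implied ι H' h).trans (chrToLa_subset_apply hg hf _ _)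
  · rintro t' H' (h | h) e he hraw hS
    · obtain ⟨-, rfl⟩ := Prod.mk.inj h
      exact hS.2 (hf.isRaw_mem_removed he hraw)
    · exact hv.hist_raw_removed t' H' h e he hraw hS.1

variable [DecidableEq α]

theorem Inv.intro (hv : Inv χ) {c : TC α} (hc : c ∈ χ.goal) :
    Inv ⟨χ.goal.erase c, insert (c, χ.next) χ.store, χ.hist, χ.next + 1⟩ := by
  refine ⟨hv.store_finite.insert _, ?_, ?_, ?_, ?_, ?_, ?_, ?_⟩
  · rintro e (rfl | he)
    exacts [Nat.lt_succ_self _, Nat.lt_succ_of_lt (hv.store_lt_next e he)]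
  · exact fun t H ht e he => Nat.lt_succ_of_lt (hv.hist_lt_next t H ht e he)
  · rintro a m i m' i' (h1 | h1) (h2 | h2)
    · obtain ⟨h1, rfl⟩ := Prod.mk.inj h1
      obtain ⟨h2, rfl⟩ := Prod.mk.inj h2
      cases h1.trans h2.symm
      exact ⟨rfl, rfl⟩
    · exact absurd h2 (hv.goal_rep_fresh a m (by simp_all) m' i')
    · exact absurd h1 (hv.goal_rep_fresh a m' (by simp_all) m i)
    · exact hv.rep_unique a m i m' i' h1 h2
  · rintro a m hm m' i (h | h)
    · obtain rfl : c = TC.rep a m' := (Prod.mk.inj h).1.symm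
      have hcount : (χ.goal.erase (.rep a m')).countP (fun c => c.isRaw = false) + 1 ≤ 1 := by
        rw [← Multiset.countP_cons_of_pos (p := fun c : TC α => c.isRaw = false) _ (rfl :
          (TC.rep a m').isRaw = false), Multiset.cons_erase hc]
        exact hv.goal_countP_rep
      have : 0 < (χ.goal.erase (.rep a m')).countP (fun c => c.isRaw = false) :=
        Multiset.countP_pos.2 ⟨_, hm, rfl⟩
      omega
    · exact hv.goal_rep_fresh a m (Multiset.mem_of_mem_erase hm) m' i h
  · exact (Multiset.countP_le_of_le _ (Multiset.erase_le c _)).trans hv.goal_countP_rep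
  · intro ι H ht
    simpa only [Implied, chrToLa_intro hc] using hv.hist_implied ι H ht
  · rintro t H ht e he hraw (rfl | hS)
    · exact lt_irrefl _ (hv.hist_lt_next t H ht _ he)
    · exact hv.hist_raw_removed t H ht e he hraw hS

theorem Inv.step {χ' : CState α} {l : Lab α} (hv : Inv χ) (hs : Step P χ l χ') : Inv χ' := by
  cases hs with
  | intro c hc => exact hv.intro hc
  | apply t H R B hg hf _ hp => exact hv.apply hg hf hp

theorem Inv.reflTransGen {χ' : CState α} (hv : Inv χ)
    (h : Relation.ReflTransGen (StepAny P) χ χ') : Inv χ' := by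
  induction h with
  | refl => exact hv
  | tail _ hs ih => exact ih.step hs.choose_spec

theorem Reachable.inv (h : Reachable P χ) : Inv χ :=
  h.choose_spec.1.inv.reflTransGen h.choose_spec.2

theorem Reachable.reflTransGen {χ' : CState α} (h : Reachable P χ)
    (h' : Relation.ReflTransGen (StepAny P) χ χ') : Reachable P χ' :=
  let ⟨χ₀, h₀, h₀χ⟩ := h
  ⟨χ₀, h₀, h₀χ.trans h'⟩

end Invariant

/-! ### Normalization -/

section Normalization

theorem PreNormal.isRaw_eq_false (h : PreNormal χ) {e : TC α × ℕ} (he : e ∈ χ.store) :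
    e.1.isRaw = false := by
  obtain ⟨a, m, h⟩ := h.2.1 e he
  rw [h]; rfl

theorem PreNormal.exists_inst_of_fires (h : PreNormal χ) (hf : Fires P χ t H R B) :
    ∃ ι, t = .inst ι := by
  cases hf with
  | inst ι => exact ⟨ι, rfl⟩
  | _ => exact absurd (h.isRaw_eq_false ‹_›) (by simp [TC.isRaw])

theorem PreNormal.mem_chrToLa_iff (h : PreNormal χ) {y : LAAtom α} :
    y ∈ chrToLa χ ↔ ∃ m i, (TC.rep y.atom m, i) ∈ χ.store ∧ y ∈ (TC.rep y.atom m).toLa := by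
  simp only [mem_chrToLa, memA, h.1, Multiset.notMem_zero, false_or]
  constructor
  · rintro ⟨c, ⟨i, hc⟩, hy⟩
    obtain ⟨a, m, rfl⟩ := h.2.1 _ hc
    obtain rfl := LAAtom.atom_eq_of_mem_toLa_rep hy
    exact ⟨m, i, hc, hy⟩
  · rintro ⟨m, i, hc, hy⟩
    exact ⟨_, ⟨i, hc⟩, hy⟩

theorem Inv.preNormal (hv : Inv χ) (hg : χ.goal = 0) (hraw : ∀ y j, (toTC y, j) ∉ χ.store) :
    PreNormal χ := by
  refine ⟨hg, ?_, fun a m₁ m₂ i₁ i₂ h₁ h₂ => (hv.rep_unique a m₁ i₁ m₂ i₂ h₁ h₂).2⟩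
  rintro ⟨c, i⟩ hc
  cases c with
  | raw a => exact absurd hc (hraw (.pos a) i)
  | rawDel a => exact absurd hc (hraw (.del a) i)
  | rep a m => exact ⟨a, m, rfl⟩

theorem Inv.exists_raw_of_not_preNormal (hv : Inv χ) (hg : χ.goal = 0) (hχ : ¬ PreNormal χ) :
    ∃ y j, (toTC y, j) ∈ χ.store := by
  by_contra h
  simp only [not_exists] at h
  exact hχ (hv.preNormal hg h)

/-- Introducing `a(X̄)` or `del(a(X̄))` trades weight 3 in the goal for 2 in the store, and an
update rule trades a stored one (2) for at most one `a_r` in the goal (1). -/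
noncomputable def normMeasure (χ : CState α) : ℕ :=
  Multiset.card χ.goal + 2 * (χ.goal.countP (fun c => c.isRaw) + {e ∈ χ.store | e.1.isRaw}.ncard)

theorem Fires.exists_raw_removed (hf : Fires P χ t H R B) (ht : t.IsUpdate) :
    ∃ e ∈ R, e ∈ χ.store ∧ e.1.isRaw := by
  cases hf with
  | inst => exact ht.elim
  | keepPos _ _ _ _ _ _ h | mergePos _ _ _ _ h | newPos _ _ h
  | keepNeg _ _ _ _ _ _ h | mergeNeg _ _ _ _ h | newNeg _ _ h => exact ⟨_, by simp, h, rfl⟩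

theorem Fires.body_of_isUpdate (hf : Fires P χ t H R B) (ht : t.IsUpdate) :
    Multiset.card B ≤ 1 ∧ B.countP (fun c => c.isRaw) = 0 := by
  cases hf with
  | inst => exact ht.elim
  | _ => exact ⟨by simp, Multiset.countP_eq_zero.2 (by simp [TC.isRaw])⟩

theorem normMeasure_apply_lt (hv : Inv χ) (hg : χ.goal = 0) (hf : Fires P χ t H R B)
    (ht : t.IsUpdate) (h : Set (RuleTag α × Set (TC α × ℕ))) (n : ℕ) :
    normMeasure ⟨B, χ.store \ R, h, n⟩ < normMeasure χ := by
  obtain ⟨e, heR, heS, he⟩ := hf.exists_raw_removed ht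
  obtain ⟨hcard, hcount⟩ := hf.body_of_isUpdate ht
  have hlt : {e ∈ χ.store \ R | e.1.isRaw}.ncard < {e ∈ χ.store | e.1.isRaw}.ncard :=
    Set.ncard_lt_ncard ⟨fun x hx => ⟨hx.1.1, hx.2⟩, fun hsub => (hsub ⟨heS, he⟩).1.2 heR⟩
      (hv.store_finite.subset (Set.sep_subset _ _))
  simp only [normMeasure, hg, hcount, Multiset.card_zero, Multiset.countP_zero]
  omega

def Represented (χ : CState α) : Prop :=
  (∀ c ∈ χ.goal, c.isRaw) ∧
    ∀ y, memA χ (toTC y) → ∃ m i, (TC.rep y.atom m, i) ∈ χ.store ∧ y ∈ (TC.rep y.atom m).toLa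

variable [DecidableEq α]

theorem normMeasure_intro_lt (hv : Inv χ) {c : TC α} (hc : c ∈ χ.goal) :
    normMeasure ⟨χ.goal.erase c, insert (c, χ.next) χ.store, χ.hist, χ.next + 1⟩
      < normMeasure χ := by
  have hcard := Multiset.card_erase_add_one hc
  have hcount := Multiset.countP_cons (fun c : TC α => c.isRaw) c (χ.goal.erase c)
  rw [Multiset.cons_erase hc] at hcount
  have hfin := hv.store_finite.subset (Set.sep_subset χ.store fun e => e.1.isRaw)
  have hraw : {e ∈ insert (c, χ.next) χ.store | e.1.isRaw}.ncard
      ≤ {e ∈ χ.store | e.1.isRaw}.ncard + if c.isRaw then 1 else 0 := by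
    split_ifs with h
    · refine (Set.ncard_le_ncard ?_ (hfin.insert _)).trans (Set.ncard_insert_le (c, χ.next) _)
      rintro e ⟨rfl | he, hr⟩
      exacts [Set.mem_insert _ _, Set.mem_insert_of_mem _ ⟨he, hr⟩]
    · refine Set.ncard_le_ncard ?_ hfin
      rintro e ⟨rfl | he, hr⟩
      exacts [absurd hr h, ⟨he, hr⟩]
  simp only [normMeasure]
  omega

theorem Inv.exists_step_isUpdate (hv : Inv χ) (hg : χ.goal = 0) {y : LAAtom α} {j : ℕ}
    (hraw : (toTC y, j) ∈ χ.store) :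
    ∃ t H R B, Fires P χ t H R B ∧ t.IsUpdate ∧
      Step P χ (.apply t) ⟨B, χ.store \ R, insert (t, H) χ.hist, χ.next⟩ := by
  by_cases hpair : ∃ y j m i, (toTC y, j) ∈ χ.store ∧ (TC.rep y.atom m, i) ∈ χ.store
  · obtain ⟨y, j, m, i, hraw, hrep⟩ := hpair
    obtain ⟨t, H, R, B, hf, hfr, ht, hp⟩ := hv.exists_fires_prio_one (P := P) hrep hraw
    exact ⟨t, H, R, B, hf, ht,
      .apply χ t H R B hg hf hfr fun t' _ _ _ _ _ => hp ▸ t'.one_le_prio⟩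
  · obtain ⟨t, R, B, hf, ht, hp⟩ := Fires.exists_new (P := P) hraw
    refine ⟨t, _, R, B, hf, ht,
      .apply χ t _ R B hg hf (hv.notMem_hist_of_raw rfl (isRaw_toTC y) hraw) ?_⟩
    intro t' H' R' B' hf' _
    by_contra hlt
    have ht' : t'.prio = 1 := by have := t'.one_le_prio; omega
    exact hpair (hf'.exists_raw_rep_of_prio_eq_one ht')

theorem Inv.exists_step_normMeasure_lt (hv : Inv χ) (hχ : ¬ PreNormal χ) :
    ∃ l χ', Step P χ l χ' ∧ chrToLa χ' = chrToLa χ ∧ normMeasure χ' < normMeasure χ := by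
  by_cases hg : χ.goal = 0
  · obtain ⟨y, j, hraw⟩ := hv.exists_raw_of_not_preNormal hg hχ
    obtain ⟨t, H, R, B, hf, ht, hs⟩ := hv.exists_step_isUpdate (P := P) hg hraw
    exact ⟨_, _, hs, chrToLa_apply_of_isUpdate hg hf ht _ _, normMeasure_apply_lt hv hg hf ht _ _⟩
  · obtain ⟨c, hc⟩ := Multiset.exists_mem_of_ne_zero hg
    exact ⟨_, _, .intro χ c hc, chrToLa_intro hc, normMeasure_intro_lt hv hc⟩

theorem Inv.exists_preNormal (hv : Inv χ) :
    ∃ χ', Relation.ReflTransGen (StepAny P) χ χ' ∧ Inv χ' ∧ PreNormal χ' ∧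
      chrToLa χ' = chrToLa χ := by
  obtain ⟨χ', hχχ', ⟨hv', himg⟩, hpn⟩ :=
    exists_reflTransGen_of_measure_lt (r := StepAny P) (D := PreNormal)
      (I := fun x => Inv x ∧ chrToLa x = chrToLa χ) normMeasure (fun x ⟨hx, himg⟩ hD => by
        obtain ⟨l, x', hs, himg', hlt⟩ := hx.exists_step_normMeasure_lt hD
        exact ⟨x', .single ⟨l, hs⟩, ⟨hx.step hs, himg'.trans himg⟩, hlt⟩) χ ⟨hv, rfl⟩
  exact ⟨χ', hχχ', hv', hpn, himg⟩

theorem Represented.exists_step (hv : Inv χ) (hr : Represented χ) (hχ : ¬ PreNormal χ) :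
    ∃ l χ', Step P χ l χ' ∧ Represented χ' ∧ chrToLa χ' = chrToLa χ ∧ χ.hist ⊆ χ'.hist ∧
      {e ∈ χ'.store | e.1.isRaw = false} = {e ∈ χ.store | e.1.isRaw = false} ∧
      normMeasure χ' < normMeasure χ := by
  by_cases hg : χ.goal = 0
  · obtain ⟨y, j, hraw⟩ := hv.exists_raw_of_not_preNormal hg hχ
    obtain ⟨m, i, hrep, hm⟩ := hr.2 y (Or.inr ⟨j, hraw⟩)
    obtain ⟨t, hf, ht, hp⟩ := Fires.exists_keep (P := P) hm hrep hraw
    have hs := Step.apply χ t _ _ _ hg hf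
      (hv.notMem_hist_of_raw (Set.mem_insert_of_mem _ rfl) (by simp) hraw)
      fun t' _ _ _ _ _ => hp ▸ t'.one_le_prio
    refine ⟨_, _, hs, ⟨by simp, fun y' hy' => ?_⟩, chrToLa_apply_of_isUpdate hg hf ht _ _,
      Set.subset_insert _ _, ?_, normMeasure_apply_lt hv hg hf ht _ _⟩
    · obtain ⟨m', i', hrep', hm'⟩ := hr.2 y' <| by
        rcases hy' with h | ⟨i, h⟩
        exacts [absurd h (Multiset.notMem_zero _), Or.inr ⟨i, h.1⟩]
      exact ⟨m', i', ⟨hrep', by cases y <;> simp [toTC]⟩, hm'⟩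
    · ext e
      simp only [Set.mem_ofPred_eq, Set.mem_sdiff, Set.mem_singleton_iff]
      constructor
      · exact fun h => ⟨h.1.1, h.2⟩
      · rintro ⟨h, he⟩
        exact ⟨⟨h, by rintro rfl; simp at he⟩, he⟩
  · obtain ⟨c, hc⟩ := Multiset.exists_mem_of_ne_zero hg
    refine ⟨_, _, .intro χ c hc, ⟨fun d hd => hr.1 d (Multiset.mem_of_mem_erase hd),
      fun y hy => ?_⟩, chrToLa_intro hc, subset_rfl, ?_, normMeasure_intro_lt hv hc⟩
    · obtain ⟨m, i, hrep, hm⟩ := hr.2 y ((memA_intro hc).1 hy)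
      exact ⟨m, i, Set.mem_insert_of_mem _ hrep, hm⟩
    · ext e
      simp only [Set.mem_ofPred_eq, Set.mem_insert_iff]
      constructor
      · rintro ⟨rfl | h, he⟩
        · simp [hr.1 _ hc] at he
        · exact ⟨h, he⟩
      · exact fun h => ⟨Or.inr h.1, h.2⟩

/-- Normalizing a `Represented` state fires only keep rules, so no `a_r` constraint changes. -/
theorem Represented.exists_preNormal (hv : Inv χ) (hr : Represented χ) :
    ∃ χ', Relation.ReflTransGen (StepAny P) χ χ' ∧ Inv χ' ∧ PreNormal χ' ∧
      chrToLa χ' = chrToLa χ ∧ χ.hist ⊆ χ'.hist ∧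
      χ'.store = {e ∈ χ.store | e.1.isRaw = false} := by
  obtain ⟨χ', hχχ', ⟨hv', -, himg, hhist, hstore⟩, hpn⟩ :=
    exists_reflTransGen_of_measure_lt (r := StepAny P) (D := PreNormal)
      (I := fun x => Inv x ∧ Represented x ∧ chrToLa x = chrToLa χ ∧ χ.hist ⊆ x.hist ∧
        {e ∈ x.store | e.1.isRaw = false} = {e ∈ χ.store | e.1.isRaw = false})
      normMeasure (fun x ⟨hx, hrx, himg, hhist, hstore⟩ hD => by
        obtain ⟨l, x', hs, hrx', himg', hhist', hstore', hlt⟩ := hrx.exists_step (P := P) hx hD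
        exact ⟨x', .single ⟨l, hs⟩, ⟨hx.step hs, hrx', himg'.trans himg, hhist.trans hhist',
          hstore'.trans hstore⟩, hlt⟩) χ ⟨hv, hr, rfl, subset_rfl, rfl⟩
  refine ⟨χ', hχχ', hv', hpn, himg, hhist, ?_⟩
  rw [← hstore]
  exact (Set.sep_eq_self_iff_mem_true.2 fun e he => hpn.isRaw_eq_false he).symm

end Normalization

/-! ### Translated rules and LA applicability -/

section Applicability

theorem Inv.applicable_of_fires (hv : Inv χ) (hg : χ.goal = 0)
    (hmin : ∀ t H R B, Fires P χ t H R B → (t, H) ∉ χ.hist → 2 ≤ t.prio) {ι : Inst α}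
    (hf : Fires P χ (.inst ι) H R B) (hι : ¬ Implied ι χ) : LAApplicable P (chrToLa χ) ι := by
  cases hf with
  | inst ι fp fn fm hP hpos hneg =>
    refine ⟨hP, ?_, ?_, hι⟩
    · intro a ha
      refine ⟨mem_chrToLa.2 ⟨_, Or.inr ⟨_, hpos a ha⟩, by simp [TC.toLa]⟩, fun hdel => ?_⟩
      obtain ⟨c, hc, hdel⟩ := mem_chrToLa.1 hdel
      obtain ⟨i, hc⟩ := (or_iff_right (by simp [hg])).1 hc
      cases c with
      | raw b => simp [TC.toLa] at hdel
      | rawDel b =>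
        obtain rfl : b = a := by simpa [TC.toLa] using hdel.symm
        obtain ⟨t, H, R, B, hf, hfr, -, ht⟩ :=
          hv.exists_fires_prio_one (P := P) (y := .del b) (hpos b ha) hc
        have := hmin t H R B hf hfr
        omega
      | rep b m =>
        obtain ⟨rfl, hm⟩ : b = a ∧ m ≠ .p := by simpa [TC.toLa, eq_comm] using hdel
        exact hm (hv.rep_unique b m i _ _ hc (hpos b ha)).1
    · intro a ha
      exact mem_chrToLa.2 ⟨_, Or.inr ⟨_, (hneg a ha).2⟩, by simp [TC.toLa, (hneg a ha).1]⟩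

theorem PreNormal.fires_of_applicable (hpn : PreNormal χ) {ι : Inst α}
    (happ : LAApplicable P (chrToLa χ) ι) :
    ∃ H, Fires P χ (.inst ι) H ∅ (ι.concl.val.map toTC) := by
  obtain ⟨hP, hposA, hnegA, -⟩ := happ
  have hpos : ∀ a, ∃ i, a ∈ ι.posA → (TC.rep a .p, i) ∈ χ.store := fun a => by
    by_cases ha : a ∈ ι.posA
    · obtain ⟨hp, hd⟩ := hposA a ha
      obtain ⟨m, i, hrep, hm⟩ := hpn.mem_chrToLa_iff.1 hp
      refine ⟨i, fun _ => ?_⟩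
      cases m
      · exact hrep
      · simp [TC.toLa, LAAtom.atom] at hm
      · exact absurd (hpn.mem_chrToLa_iff (y := .del a).2
          ⟨_, i, hrep, by simp [TC.toLa, LAAtom.atom]⟩) hd
    · exact ⟨0, fun h => absurd h ha⟩
  have hneg : ∀ a, ∃ mi : Mode × ℕ, a ∈ ι.negA →
      mi.1 ≠ .p ∧ (TC.rep a mi.1, mi.2) ∈ χ.store := fun a => by
    by_cases ha : a ∈ ι.negA
    · obtain ⟨m, i, hrep, hm⟩ := hpn.mem_chrToLa_iff.1 (hnegA a ha)
      exact ⟨(m, i), fun _ => ⟨by simpa [TC.toLa, LAAtom.atom] using hm, hrep⟩⟩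
    · exact ⟨(.n, 0), fun h => absurd h ha⟩
  choose fp hfp using hpos
  choose fmn hfmn using hneg
  exact ⟨_, .inst ι fp (fun a => (fmn a).2) (fun a => (fmn a).1) hP hfp hfmn⟩

variable [DecidableEq α]

theorem Inv.laStep_of_step (hv : Inv χ) {ι : Inst α} {χ' : CState α}
    (hs : Step P χ (.apply (.inst ι)) χ') (hι : ¬ Implied ι χ) :
    LAStep P (chrToLa χ) (chrToLa χ') := by
  have himg := hs.chrToLa_eq_union_concl
  cases hs with
  | apply t H R B hg hf _ hp =>
    refine ⟨ι, ?_, himg, fun ι' happ' => ?_⟩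
    · exact hv.applicable_of_fires hg (fun t H R B hf hfr => le_add_self.trans (hp t H R B hf hfr))
        hf hι
    -- For `ι.prio = 0` the CHR priority 2 ties with the `new` rules, so `χ` need not be
    -- pre-normal; but then there is nothing to show.
    rcases Nat.eq_zero_or_pos ι.prio with h0 | hpos
    · exact h0 ▸ Nat.zero_le _
    have hpn : PreNormal χ := hv.preNormal hg fun y j hraw => by
      obtain ⟨t, H, R, B, hf, hfr, -, ht⟩ := hv.exists_fires_prio_le_two (P := P) hraw
      have : ι.prio + 2 ≤ t.prio := hp t H R B hf hfr
      omega
    obtain ⟨H', hf'⟩ := hpn.fires_of_applicable happ'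
    simpa [RuleTag.prio] using hp _ _ _ _ hf' (hv.notMem_hist_of_applicable happ' H')

end Applicability

/-! ### Implied rules of lower priority -/

section Blockers

theorem Inv.chrToLa_finite (hv : Inv χ) : (chrToLa χ).Finite := by
  rw [chrToLa_eq_biUnion]
  exact (χ.goal.finite_toSet.biUnion fun c _ => c.toLa_finite).union
    (hv.store_finite.biUnion fun e _ => e.1.toLa_finite)

theorem Inst.finite_setOf_subset (n : ℕ) {A B : Set α} {C : Set (LAAtom α)} (hA : A.Finite)
    (hB : B.Finite) (hC : C.Finite) :
    {ι : Inst α | ι.prio < n ∧ ↑ι.posA ⊆ A ∧ ↑ι.negA ⊆ B ∧ ↑ι.concl ⊆ C}.Finite := by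
  let f : Inst α → ℕ × Set α × Set α × Set (LAAtom α) :=
    fun ι => (ι.prio, ι.posA, ι.negA, ι.concl)
  have hf : f.Injective := by
    rintro ⟨⟩ ⟨⟩ h
    simp_all [f]
  refine Set.Finite.of_finite_image (f := f) ?_ hf.injOn
  refine ((Set.finite_Iio n).prod (hA.finite_subsets.prod
    (hB.finite_subsets.prod hC.finite_subsets))).subset ?_
  rintro _ ⟨ι, hι, rfl⟩
  exact hι

/-- The firings of translated rules of LA priority below `p₀` that still have to happen
before the translation of an LA rule of priority `p₀` may fire. -/
def blockers (P : Set (Inst α)) (p₀ : ℕ) (χ : CState α) : Set (Inst α × Set (TC α × ℕ)) :=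
  {x | (∃ R B, Fires P χ (.inst x.1) x.2 R B) ∧ (.inst x.1, x.2) ∉ χ.hist ∧ x.1.prio < p₀}

theorem Inv.implied_of_mem_blockers (hv : Inv χ) (hpn : PreNormal χ) {p₀ : ℕ}
    (hmax : ∀ ι, LAApplicable P (chrToLa χ) ι → p₀ ≤ ι.prio) {x : Inst α × Set (TC α × ℕ)}
    (hx : x ∈ blockers P p₀ χ) : Implied x.1 χ := by
  obtain ⟨⟨R, B, hf⟩, -, hlt⟩ := hx
  by_contra hι
  refine absurd (hmax _ (hv.applicable_of_fires hpn.1 (fun t H R B hf _ => ?_) hf hι)) hlt.not_ge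
  obtain ⟨ι, rfl⟩ := hpn.exists_inst_of_fires hf
  exact le_add_self

theorem Inv.blockers_finite (hv : Inv χ) (hpn : PreNormal χ) {p₀ : ℕ}
    (hmax : ∀ ι, LAApplicable P (chrToLa χ) ι → p₀ ≤ ι.prio) : (blockers P p₀ χ).Finite := by
  have hσ := hv.chrToLa_finite
  have hpos : Function.Injective (@LAAtom.pos α) := fun _ _ => LAAtom.pos.inj
  have hdel : Function.Injective (@LAAtom.del α) := fun _ _ => LAAtom.del.inj
  refine ((Inst.finite_setOf_subset p₀ (hσ.preimage hpos.injOn) (hσ.preimage hdel.injOn)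
    hσ).prod hv.store_finite.finite_subsets).subset ?_
  rintro ⟨ι, H⟩ hx
  have himp := hv.implied_of_mem_blockers hpn hmax hx
  obtain ⟨⟨R, B, hf⟩, -, hlt⟩ := hx
  dsimp only at hf hlt himp
  have hH := hf.heads_subset
  cases hf with
  | inst _ fp fn fm _ hpos hneg =>
    refine ⟨⟨hlt, fun a ha => ?_, fun a ha => ?_, himp⟩, hH⟩
    · exact mem_chrToLa.2 ⟨_, Or.inr ⟨_, hpos a ha⟩, by simp [TC.toLa]⟩
    · exact mem_chrToLa.2 ⟨_, Or.inr ⟨_, (hneg a ha).2⟩, by simp [TC.toLa, (hneg a ha).1]⟩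

theorem PreNormal.add_two_le_prio (hpn : PreNormal χ) {p₀ q : ℕ} (hq : q ≤ p₀)
    (hlow : ∀ x ∈ blockers P p₀ χ, q ≤ x.1.prio) (hf : Fires P χ t H R B)
    (hfr : (t, H) ∉ χ.hist) : q + 2 ≤ t.prio := by
  obtain ⟨ι, rfl⟩ := hpn.exists_inst_of_fires hf
  refine Nat.add_le_add_right ?_ 2
  by_cases hlt : ι.prio < p₀
  · exact hlow (ι, H) ⟨⟨R, B, hf⟩, hfr, hlt⟩
  · omega

theorem Fires.of_store_eq {χ' : CState α} (h : χ.store = χ'.store) (hf : Fires P χ t H R B) :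
    Fires P χ' t H R B := by
  cases hf <;> rw [h] at * <;> constructor <;> assumption

variable [DecidableEq α]

theorem Inv.exists_fire_implied (hv : Inv χ) (hpn : PreNormal χ) {ι : Inst α}
    (hf : Fires P χ (.inst ι) H R B) (hfr : (.inst ι, H) ∉ χ.hist)
    (hp : ∀ t' H' R' B', Fires P χ t' H' R' B' → (t', H') ∉ χ.hist → ι.prio + 2 ≤ t'.prio)
    (himp : Implied ι χ) :
    ∃ χ', Relation.ReflTransGen (StepAny P) χ χ' ∧ Inv χ' ∧ PreNormal χ' ∧
      chrToLa χ' = chrToLa χ ∧ χ'.store = χ.store ∧ insert (.inst ι, H) χ.hist ⊆ χ'.hist := by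
  obtain ⟨rfl, rfl⟩ : R = ∅ ∧ B = ι.concl.val.map toTC := by cases hf; exact ⟨rfl, rfl⟩
  have hs : Step P χ (.apply (.inst ι))
      ⟨ι.concl.val.map toTC, χ.store \ ∅, insert (.inst ι, H) χ.hist, χ.next⟩ :=
    .apply χ _ H ∅ _ hpn.1 hf hfr hp
  have hr : Represented
      ⟨ι.concl.val.map toTC, χ.store \ ∅, insert (.inst ι, H) χ.hist, χ.next⟩ := by
    refine ⟨by simp, fun y hy => ?_⟩
    rcases hy with hy | ⟨j, hj, -⟩
    · obtain ⟨y', hy', hyy'⟩ := Multiset.mem_map.1 hy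
      obtain rfl := toTC_injective hyy'
      obtain ⟨m, i, hrep, hm⟩ := hpn.mem_chrToLa_iff.1 (himp hy')
      exact ⟨m, i, ⟨hrep, id⟩, hm⟩
    · exact absurd (hpn.isRaw_eq_false hj) (by simp)
  obtain ⟨χ', hχ', hv', hpn', himg, hhist, hstore⟩ := hr.exists_preNormal (P := P) (hv.step hs)
  refine ⟨χ', .head ⟨_, hs⟩ hχ', hv', hpn', ?_, ?_, hhist⟩
  · rw [himg, hs.chrToLa_eq_union_concl, Set.union_eq_left.2 himp]
  · rw [hstore]
    ext e
    exact ⟨fun h => h.1.1, fun h => ⟨⟨h, id⟩, hpn.isRaw_eq_false h⟩⟩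

theorem Inv.exists_blockers_ncard_lt (hv : Inv χ) (hpn : PreNormal χ) {p₀ : ℕ}
    (hmax : ∀ ι, LAApplicable P (chrToLa χ) ι → p₀ ≤ ι.prio)
    (hne : (blockers P p₀ χ).Nonempty) :
    ∃ χ', Relation.ReflTransGen (StepAny P) χ χ' ∧ Inv χ' ∧ PreNormal χ' ∧
      chrToLa χ' = chrToLa χ ∧ (blockers P p₀ χ').ncard < (blockers P p₀ χ).ncard := by
  have hfin := hv.blockers_finite hpn hmax
  obtain ⟨⟨ι, H⟩, hx, hmin⟩ := Set.exists_min_image _ (fun x => x.1.prio) hfin hne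
  have himp := hv.implied_of_mem_blockers hpn hmax hx
  obtain ⟨⟨R, B, hf⟩, hfr, hlt⟩ := id hx
  obtain ⟨χ', hχ', hv', hpn', himg, hstore, hhist⟩ := hv.exists_fire_implied hpn hf hfr
    (fun _ _ _ _ => hpn.add_two_le_prio hlt.le hmin) himp
  refine ⟨χ', hχ', hv', hpn', himg, Set.ncard_lt_ncard ?_ hfin⟩
  refine Set.ssubset_of_subset_of_ssubset (s₂ := blockers P p₀ χ \ {(ι, H)}) ?_
    (Set.sdiff_singleton_ssubset.2 hx)
  rintro ⟨ι', H'⟩ ⟨⟨R', B', hf'⟩, hfr', hlt'⟩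
  refine ⟨⟨⟨R', B', hf'.of_store_eq hstore⟩, fun h => hfr' (hhist (Or.inr h)), hlt'⟩, ?_⟩
  rintro ⟨⟩
  exact hfr' (hhist (Or.inl rfl))

theorem Inv.exists_blockers_eq_empty (hv : Inv χ) (hpn : PreNormal χ) {p₀ : ℕ}
    (hmax : ∀ ι, LAApplicable P (chrToLa χ) ι → p₀ ≤ ι.prio) :
    ∃ χ', Relation.ReflTransGen (StepAny P) χ χ' ∧ Inv χ' ∧ PreNormal χ' ∧
      chrToLa χ' = chrToLa χ ∧ blockers P p₀ χ' = ∅ := by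
  obtain ⟨χ', hχχ', ⟨hv', hpn', himg⟩, hD⟩ :=
    exists_reflTransGen_of_measure_lt (r := StepAny P) (D := fun x => blockers P p₀ x = ∅)
      (I := fun x => Inv x ∧ PreNormal x ∧ chrToLa x = chrToLa χ)
      (fun x => (blockers P p₀ x).ncard) (fun x ⟨hx, hpnx, himg⟩ hD => by
        obtain ⟨x', hxx', hx', hpnx', himg', hlt⟩ :=
          hx.exists_blockers_ncard_lt hpnx (himg ▸ hmax) (Set.nonempty_iff_ne_empty.2 hD)
        exact ⟨x', hxx', ⟨hx', hpnx', himg'.trans himg⟩, hlt⟩) χ ⟨hv, hpn, rfl⟩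
  exact ⟨χ', hχχ', hv', hpn', himg, hD⟩

end Blockers

/-! ### The two simulations -/

section Simulation

theorem not_laLts_none {σ σ' : Set (LAAtom α)} : ¬ LaLts P σ none σ' :=
  fun h => Option.some_ne_none _ h.2.symm

variable [DecidableEq α]

theorem Reachable.exists_step_of_laStep (h : Reachable P χ) {σ' : Set (LAAtom α)}
    (hla : LAStep P (chrToLa χ) σ') :
    ∃ χ₁ χ₂, Reachable P χ₁ ∧ StepAny P χ₁ χ₂ ∧ chrToLa χ₁ = chrToLa χ ∧ chrToLa χ₂ = σ' := by
  obtain ⟨ι, happ, rfl, hmax⟩ := hla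
  obtain ⟨χ₀, h₀, hv₀, hpn₀, himg₀⟩ := h.inv.exists_preNormal (P := P)
  obtain ⟨χ₁, h₁, hv₁, hpn₁, himg₁, hblk⟩ :=
    hv₀.exists_blockers_eq_empty hpn₀ (p₀ := ι.prio) (himg₀ ▸ hmax)
  have himg : chrToLa χ₁ = chrToLa χ := himg₁.trans himg₀
  rw [← himg] at happ
  obtain ⟨H, hf⟩ := hpn₁.fires_of_applicable happ
  have hs : Step P χ₁ (.apply (.inst ι)) _ :=
    .apply χ₁ _ H ∅ _ hpn₁.1 hf (hv₁.notMem_hist_of_applicable happ H) fun _ _ _ _ =>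
      hpn₁.add_two_le_prio le_rfl (by simp [hblk])
  exact ⟨χ₁, _, (h.reflTransGen h₀).reflTransGen h₁, ⟨_, hs⟩, himg,
    by rw [hs.chrToLa_eq_union_concl, himg]⟩

theorem Reachable.laStep_of_step (h : Reachable P χ) {χ' : CState α} (hs : StepAny P χ χ')
    (hne : chrToLa χ' ≠ chrToLa χ) : LAStep P (chrToLa χ) (chrToLa χ') := by
  obtain ⟨l, hs⟩ := hs
  by_cases hl : ∃ ι, l = .apply (.inst ι)
  · obtain ⟨ι, rfl⟩ := hl
    refine h.inv.laStep_of_step hs fun himp => hne ?_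
    rw [hs.chrToLa_eq_union_concl, Set.union_eq_left.2 himp]
  · exact absurd (hs.chrToLa_eq_of_ne_inst fun ι h => hl ⟨ι, h⟩) hne

theorem Reachable.chrLts_of_laLts (h : Reachable P χ) {a σ' : Set (LAAtom α)}
    (hla : LaLts P (chrToLa χ) (some a) σ') : ChrLts P (chrToLa χ) (some a) σ' := by
  obtain ⟨hstep, hl⟩ := hla
  obtain ⟨χ₁, χ₂, hχ₁, hs, himg₁, himg₂⟩ := h.exists_step_of_laStep hstep
  have hne : σ' \ chrToLa χ ≠ ∅ := by
    obtain ⟨ι, happ, rfl, -⟩ := hstep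
    obtain ⟨x, hx, hx'⟩ := Set.not_subset.1 happ.2.2.2
    exact Set.nonempty_iff_ne_empty.1 ⟨x, Or.inr hx, hx'⟩
  refine ⟨χ₁, χ₂, hχ₁, hs, himg₁, himg₂, ?_, ?_⟩ <;> rw [himg₁, himg₂]
  · exact fun he => absurd he hne
  · exact fun _ => hl

theorem ChrLts.exists_reachable {q q' : Set (LAAtom α)} {l : Option (Set (LAAtom α))}
    (h : ChrLts P q l q') : ∃ χ, Reachable P χ ∧ chrToLa χ = q' :=
  let ⟨_, χ', hχ, hs, _, hq', _⟩ := h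
  ⟨χ', hχ.reflTransGen (.single hs), hq'⟩

theorem ChrLts.eq_of_none {q q' : Set (LAAtom α)} (h : ChrLts P q none q') : q' = q := by
  obtain ⟨χ, χ', -, ⟨l, hs⟩, rfl, rfl, -, hvis⟩ := h
  refine (Set.sdiff_eq_empty.1 ?_).antisymm hs.chrToLa_subset
  by_contra hne
  exact Option.some_ne_none _ (hvis hne).symm

theorem ChrLts.laLts {q q' a : Set (LAAtom α)} (h : ChrLts P q (some a) q') :
    LaLts P q (some a) q' := by
  obtain ⟨χ, χ', hχ, hs, rfl, rfl, hτ, hvis⟩ := h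
  have hne : chrToLa χ' \ chrToLa χ ≠ ∅ := fun he => Option.some_ne_none _ (hτ he)
  exact ⟨hχ.laStep_of_step hs fun he => hne (by rw [he, Set.sdiff_self]), hvis hne⟩

end Simulation

end LA2CHR

open LA2CHR in
/-- Let `S₁` be the set of (all) Logical Algorithms states of `P` and `S₂` the set of
`chrToLa`-images of the CHR^rp states of `T(P)` reachable from initial states
`⟨G, ∅, true, ∅⟩₁` with `G` an LA state.  With LA transitions labeled by the state
change and CHR^rp transitions labeled by the change of the `chrToLa`-image (silent if
there is no change), the equality relation between `S₁` and `S₂` is a weak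
bisimulation. -/
theorem equality_is_weak_bisimulation {α : Type} [DecidableEq α] (P : Set (Inst α)) :
    IsWeakBisim (LaLts P) (ChrLts P)
      (fun p q => p = q ∧ q ∈ {x | ∃ χ, Reachable P χ ∧ chrToLa χ = x}) := by
  refine ⟨fun p q p' _ h => (not_laLts_none h).elim, ?_, ?_, ?_⟩
  · rintro p _ p' a ⟨rfl, χ, hχ, rfl⟩ h
    have h' := hχ.chrLts_of_laLts h
    exact ⟨_, _, _, .refl, h', .refl, rfl, h'.exists_reachable⟩
  · rintro p q q' ⟨rfl, -⟩ h
    exact ⟨p, .refl, h.eq_of_none.symm, h.exists_reachable⟩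
  · rintro p q q' a ⟨rfl, -⟩ h
    exact ⟨_, _, _, .refl, h.laLts, .refl, rfl, h.exists_reachable⟩
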